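/- arXiv:1507.01637 — 2 statements merged into one kernel-verified Lean document; each statement's English description precedes it below -/
import Mathlib

section
/- Let d ≥ 1, let J be a finite index set with nonnegative radii r = (r_j)_{j∈J}, let x ∈ (ℝᵈ)^J, and let I, K ⊆ J be disjoint nonempty subsets. If x is narrow relative to the split {I, K}, i.e., max(ρ(x|I), ρ(x|K)) < (1/2)‖c(x|I) − c(x|K)‖, then s := c(x|I) − c(x|K) ≠ 0 and, setting m := (c(x|I) + c(x|K))/2, one has ⟨x_i − m, s/‖s‖⟩ > r_i for every i ∈ I; consequently ‖x_i − x_k‖ > r_i + r_k for all i ∈ I and k ∈ K. -/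
open Finset
open scoped RealInnerProductSpace

/-- Centroid of the partial configuration `x|A`. -/
noncomputable def centroid {J : Type*} {E : Type*} [NormedAddCommGroup E] [NormedSpace ℝ E]
    (x : J → E) (A : Finset J) : E :=
  (A.card : ℝ)⁻¹ • ∑ a ∈ A, x a

/-- The radius `ρ(x|A)` of the partial configuration `x|A` of disks with radii `r`:
the largest distance from the centroid to the boundary of a disk in the cluster. -/
noncomputable def confRadius {J : Type*} {E : Type*} [NormedAddCommGroup E] [NormedSpace ℝ E]
    (r : J → ℝ) (x : J → E) (A : Finset J) : ℝ :=
  if h : A.Nonempty then A.sup' h fun a => ‖x a - centroid x A‖ + r a else 0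

lemma confRadius_le {J : Type*} {E : Type*} [NormedAddCommGroup E] [NormedSpace ℝ E]
    (r : J → ℝ) (x : J → E) {A : Finset J} (hA : A.Nonempty) {a : J} (ha : a ∈ A) :
    ‖x a - centroid x A‖ + r a ≤ confRadius r x A := by
  rw [confRadius, dif_pos hA]
  exact le_sup' (fun a => ‖x a - centroid x A‖ + r a) ha

/-- if `x` is narrow relative to the split `{I, K}`, then the centroid
difference is nonzero, every `i ∈ I` has clearance more than `r i` from the
perpendicular-bisector hyperplane, and all cross pairs are collision-free. -/
theorem narrow_split_separation {J : Type*} [DecidableEq J] (d : ℕ) (hd : 1 ≤ d)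
    (r : J → ℝ) (hr : ∀ j, 0 ≤ r j) (x : J → EuclideanSpace ℝ (Fin d))
    (I K : Finset J) (hI : I.Nonempty) (hK : K.Nonempty) (hdisj : Disjoint I K)
    (hnarrow : max (confRadius r x I) (confRadius r x K) <
      2⁻¹ * ‖centroid x I - centroid x K‖) :
    centroid x I - centroid x K ≠ 0 ∧
    (∀ i ∈ I, r i <
      ⟪x i - (2 : ℝ)⁻¹ • (centroid x I + centroid x K),
        ‖centroid x I - centroid x K‖⁻¹ • (centroid x I - centroid x K)⟫) ∧
    ∀ i ∈ I, ∀ k ∈ K, r i + r k < ‖x i - x k‖ := by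
  set cI := centroid x I
  set cK := centroid x K
  set s := cI - cK with hs
  set m := (2 : ℝ)⁻¹ • (cI + cK) with hm
  have hboundI : ∀ i ∈ I, ‖x i - cI‖ + r i ≤ confRadius r x I := fun i hi =>
    confRadius_le r x ⟨i, hi⟩ hi
  have hboundK : ∀ k ∈ K, ‖x k - cK‖ + r k ≤ confRadius r x K := fun k hk =>
    confRadius_le r x ⟨k, hk⟩ hk
  clear_value cI cK s m
  obtain ⟨i0, hi0⟩ := hI
  have hρI0 : 0 ≤ confRadius r x I :=
    le_trans (add_nonneg (norm_nonneg _) (hr i0)) (hboundI i0 hi0)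
  have hsnorm : 0 < ‖s‖ := by
    nlinarith [le_max_left (confRadius r x I) (confRadius r x K), hnarrow]
  have hsne : s ≠ 0 := by
    intro h; rw [h, norm_zero] at hsnorm; exact lt_irrefl 0 hsnorm
  have hu : ‖‖s‖⁻¹ • s‖ = 1 := by
    rw [norm_smul, norm_inv, norm_norm, inv_mul_cancel₀ (ne_of_gt hsnorm)]
  have hss : ⟪s, ‖s‖⁻¹ • s⟫ = ‖s‖ := by
    rw [real_inner_smul_right, real_inner_self_eq_norm_mul_norm]
    field_simp
  -- Claim A
  have hA : ∀ i ∈ I, r i < ⟪x i - m, ‖s‖⁻¹ • s⟫ := by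
    intro i hi
    have h1 : ‖x i - cI‖ + r i < 2⁻¹ * ‖s‖ :=
      lt_of_le_of_lt (hboundI i hi)
        (lt_of_le_of_lt (le_max_left _ _) hnarrow)
    have hdecomp : x i - m = (x i - cI) + (2 : ℝ)⁻¹ • s := by
      rw [hm, hs]; module
    rw [hdecomp, inner_add_left, real_inner_smul_left, hss]
    have h2 : -‖x i - cI‖ ≤ ⟪x i - cI, ‖s‖⁻¹ • s⟫ := by
      have := abs_real_inner_le_norm (x i - cI) (‖s‖⁻¹ • s)
      rw [hu, mul_one] at this
      linarith [abs_le.mp this]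
    linarith
  -- Claim B
  have hB : ∀ k ∈ K, ⟪x k - m, ‖s‖⁻¹ • s⟫ < -(r k) := by
    intro k hk
    have h1 : ‖x k - cK‖ + r k < 2⁻¹ * ‖s‖ :=
      lt_of_le_of_lt (hboundK k hk)
        (lt_of_le_of_lt (le_max_right _ _) hnarrow)
    have hdecomp : x k - m = (x k - cK) - (2 : ℝ)⁻¹ • s := by
      rw [hm, hs]; module
    rw [hdecomp, inner_sub_left, real_inner_smul_left, hss]
    have h2 : ⟪x k - cK, ‖s‖⁻¹ • s⟫ ≤ ‖x k - cK‖ := by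
      have := real_inner_le_norm (x k - cK) (‖s‖⁻¹ • s)
      rw [hu, mul_one] at this
      exact this
    linarith
  refine ⟨hsne, hA, ?_⟩
  intro i hi k hk
  have h1 := hA i hi
  have h2 := hB k hk
  have h3 : ⟪x i - x k, ‖s‖⁻¹ • s⟫ = ⟪x i - m, ‖s‖⁻¹ • s⟫ - ⟪x k - m, ‖s‖⁻¹ • s⟫ := by
    rw [← inner_sub_left]
    congr 1
    abel
  have h4 : ⟪x i - x k, ‖s‖⁻¹ • s⟫ ≤ ‖x i - x k‖ := by
    have := real_inner_le_norm (x i - x k) (‖s‖⁻¹ • s)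
    rwa [hu, mul_one] at this
  linarith
end

section
/- Let d ≥ 1, let J be a finite index set with nonnegative radii r = (r_j)_{j∈J}, let x ∈ (ℝᵈ)^J, and let I, K ⊆ J be disjoint nonempty subsets such that x is narrow relative to the split {I, K}. Let R : ℝᵈ → ℝᵈ be a linear isometry, and define x' ∈ (ℝᵈ)^J by x'_a := c(x|I) + R(x_a − c(x|I)) for a ∈ I and x'_a := x_a for a ∉ I. Then c(x'|I) = c(x|I) and ρ(x'|I) = ρ(x|I), the configuration x' is again narrow relative to the split {I, K}, and consequently ‖x'_i − x'_k‖ > r_i + r_k for all i ∈ I and k ∈ K. -/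
open Finset
open scoped RealInnerProductSpace

/-- Centroid depends only on values on `A`. -/
theorem centroid_congr {J : Type*} {E : Type*} [NormedAddCommGroup E] [NormedSpace ℝ E]
    {x y : J → E} {A : Finset J} (h : ∀ a ∈ A, x a = y a) :
    _root_.centroid x A = _root_.centroid y A := by
  unfold _root_.centroid
  rw [Finset.sum_congr rfl h]

/-- rigidly rotating the partial configuration `x|I` about its centroid
preserves the centroid, the cluster radius, narrowness of the split `{I, K}`, and the
collision-freedom of all cross pairs. -/
theorem narrow_split_rigid_rotation {J : Type*} [DecidableEq J] (d : ℕ) (hd : 1 ≤ d)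
    (r : J → ℝ) (hr : ∀ j, 0 ≤ r j) (x : J → EuclideanSpace ℝ (Fin d))
    (I K : Finset J) (hI : I.Nonempty) (hK : K.Nonempty) (hdisj : Disjoint I K)
    (hnarrow : max (confRadius r x I) (confRadius r x K) <
      2⁻¹ * ‖centroid x I - centroid x K‖)
    (R : EuclideanSpace ℝ (Fin d) →ₗᵢ[ℝ] EuclideanSpace ℝ (Fin d))
    (x' : J → EuclideanSpace ℝ (Fin d))
    (hx' : x' = fun a => if a ∈ I then centroid x I + R (x a - centroid x I) else x a) :
    centroid x' I = centroid x I ∧ confRadius r x' I = confRadius r x I ∧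
    max (confRadius r x' I) (confRadius r x' K) <
      2⁻¹ * ‖centroid x' I - centroid x' K‖ ∧
    ∀ i ∈ I, ∀ k ∈ K, r i + r k < ‖x' i - x' k‖ := by
  have hIcard : (I.card : ℝ) ≠ 0 := by
    exact_mod_cast Finset.card_ne_zero_of_mem hI.choose_spec
  set c := _root_.centroid x I with hc
  have hxI : ∀ a ∈ I, x' a = c + R (x a - c) := by
    intro a ha; rw [hx']; simp [ha]
  have hxK : ∀ a ∈ K, x' a = x a := by
    intro a ha
    have : a ∉ I := fun hIa => (Finset.disjoint_left.mp hdisj) hIa ha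
    rw [hx']; simp [this]
  -- sum of deviations is zero
  have hz : ∑ a ∈ I, (x a - c) = 0 := by
    rw [Finset.sum_sub_distrib, Finset.sum_const, sub_eq_zero, hc]
    unfold _root_.centroid
    rw [← Nat.cast_smul_eq_nsmul ℝ, smul_smul, mul_inv_cancel₀ hIcard, one_smul]
  have hcI : centroid x' I = c := by
    unfold _root_.centroid
    rw [Finset.sum_congr rfl hxI, Finset.sum_add_distrib, ← map_sum, hz, map_zero, add_zero,
      Finset.sum_const, ← Nat.cast_smul_eq_nsmul ℝ, smul_smul, inv_mul_cancel₀ hIcard, one_smul]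
  have hcK : _root_.centroid x' K = _root_.centroid x K := centroid_congr hxK
  have hnormI : ∀ a ∈ I, ‖x' a - _root_.centroid x' I‖ = ‖x a - c‖ := by
    intro a ha
    rw [hcI, hxI a ha, add_sub_cancel_left, R.norm_map]
  have hρI : confRadius r x' I = confRadius r x I := by
    unfold confRadius
    rw [dif_pos hI, dif_pos hI]
    exact Finset.sup'_congr hI rfl (fun a ha => by rw [hnormI a ha, hc])
  have hρK : confRadius r x' K = confRadius r x K := by
    unfold confRadius
    rw [dif_pos hK, dif_pos hK]
    exact Finset.sup'_congr hK rfl (fun a ha => by rw [hxK a ha, hcK])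
  refine ⟨hcI, hρI, ?_, ?_⟩
  · rw [hρI, hρK, hcI, hcK]; exact hnarrow
  · intro i hi k hk
    have h1 : ‖x' i - _root_.centroid x' I‖ + r i ≤ confRadius r x' I := by
      unfold confRadius; rw [dif_pos hI]
      exact Finset.le_sup' (fun a => ‖x' a - _root_.centroid x' I‖ + r a) hi
    have h2 : ‖x' k - _root_.centroid x' K‖ + r k ≤ confRadius r x' K := by
      unfold confRadius; rw [dif_pos hK]
      exact Finset.le_sup' (fun a => ‖x' a - _root_.centroid x' K‖ + r a) hk
    have hmaxI : confRadius r x' I < 2⁻¹ * ‖c - centroid x K‖ := by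
      rw [hρI]; exact lt_of_le_of_lt (le_max_left _ _) hnarrow
    have hmaxK : confRadius r x' K < 2⁻¹ * ‖c - centroid x K‖ := by
      rw [hρK]; exact lt_of_le_of_lt (le_max_right _ _) hnarrow
    have htri : ‖_root_.centroid x' I - _root_.centroid x' K‖ ≤
        ‖_root_.centroid x' I - x' i‖ + ‖x' i - x' k‖ + ‖x' k - _root_.centroid x' K‖ := by
      simpa [dist_eq_norm] using dist_triangle4 (_root_.centroid x' I) (x' i) (x' k)
        (_root_.centroid x' K)
    have h3 : ‖_root_.centroid x' I - x' i‖ = ‖x' i - _root_.centroid x' I‖ := norm_sub_rev _ _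
    rw [hcI] at h1 h3 htri
    rw [hcK] at h2 htri
    linarith
end
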